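/- A spinor field κ_A satisfies the twistor equation ∇_{A'(A}κ_{B)} = 0 if and only if it satisfies the pair of equations ∇κ_B + (2/3)∇_B{}^{Q}κ_Q = 0 and ∇_{(AB}κ_{C)} = 0; moreover, the second of these is equivalent to the spatial twistor equation D_{(AB}κ_{C)} − (1/2)K_{Q(ABC)}κ^{Q} = 0, which is intrinsic to the leaves of the foliation. -/

import Mathlib

noncomputable section

/-- Component index type for 2-spinors. -/
abbrev Ix := Fin 2

/-- The antisymmetric spinor metric ε_{AB} (components). -/
def eps : Ix → Ix → ℂ := fun A B =>
  if A = 0 ∧ B = 1 then 1 else if A = 1 ∧ B = 0 then -1 else 0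

/-- Spinor fields on `M` with `k` unprimed and `l` primed component indices. -/
abbrev SpF (M : Type) (k l : ℕ) : Type := M → (Fin k → Ix) → (Fin l → Ix) → ℂ

/-- Total symmetrisation over `n` spinor indices. -/
def symn {n : ℕ} (f : (Fin n → Ix) → ℂ) (a : Fin n → Ix) : ℂ :=
  (∑ σ : Equiv.Perm (Fin n), f (a ∘ σ)) / (Nat.factorial n : ℂ)

/-- Abstract globally hyperbolic spacetime with spin structure, presented through
its 2-spinor calculus: the spinor covariant derivative `nabla` (acting on spinor
fields of any valence, the two derivative indices being placed first), the Weyl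
curvature spinor (in vacuum the only curvature), and causal/smoothness notions. -/
structure SpinGeom where
  M : Type
  top : TopologicalSpace M
  nabla : ∀ {k l : ℕ}, SpF M k l → SpF M (k+1) (l+1)
  Weyl : M → (Fin 4 → Ix) → ℂ
  weyl_symm : ∀ x (σ : Equiv.Perm (Fin 4)) (a : Fin 4 → Ix), Weyl x (a ∘ σ) = Weyl x a
  nabla_add : ∀ {k l : ℕ} (f g : SpF M k l),
    (nabla fun x a b => f x a b + g x a b) = fun x a b => nabla f x a b + nabla g x a b
  nabla_smul : ∀ {k l : ℕ} (c : ℂ) (f : SpF M k l),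
    (nabla fun x a b => c * f x a b) = fun x a b => c * nabla f x a b
  IsCauchySurface : Set M → Prop
  IsSpacelikeHypersurface : Set M → Prop
  SmoothFn : (M → ℂ) → Prop
  SmoothOn : (M → ℂ) → Set M → Prop

attribute [instance] SpinGeom.top

namespace SpinGeom

variable (G : SpinGeom)

/-- The D'Alembertian □ = ∇_{AA'}∇^{AA'} acting on spinor fields. -/
def box {k l : ℕ} (f : SpF G.M k l) : SpF G.M k l := fun x a b =>
  ∑ A, ∑ B, ∑ A', ∑ B', eps A B * eps A' B' *
    G.nabla (G.nabla f) x (Fin.cons A (Fin.cons B a)) (Fin.cons A' (Fin.cons B' b))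

/-- The complex conjugate Weyl spinor Ψ̄_{A'B'C'D'} (components). -/
def WeylBar : G.M → (Fin 4 → Ix) → ℂ := fun x a => (starRingEnd ℂ) (G.Weyl x a)

end SpinGeom

namespace SpinGeom

variable (G : SpinGeom)

/-- Normal derivative ∇ = τ^{AA'}∇_{AA'} along the normal spinor τ. -/
def nablaN (τ : SpF G.M 1 1) {k l : ℕ} (f : SpF G.M k l) : SpF G.M k l := fun x a b =>
  ∑ A, ∑ A', ∑ B, ∑ B', eps A B * eps A' B' * τ x ![B] ![B'] *
    G.nabla f x (Fin.cons A a) (Fin.cons A' b)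

/-- The Sen connection ∇_{AB} = τ_{(A}{}^{A'}∇_{B)A'}; the two new unprimed indices
are placed first. -/
def sen (τ : SpF G.M 1 1) {k l : ℕ} (f : SpF G.M k l) : SpF G.M (k+2) l := fun x a b =>
  ((∑ A', ∑ B', eps A' B' * τ x ![a 0] ![B'] *
      G.nabla f x (Fin.cons (a 1) fun i => a i.succ.succ) (Fin.cons A' b)) +
   (∑ A', ∑ B', eps A' B' * τ x ![a 1] ![B'] *
      G.nabla f x (Fin.cons (a 0) fun i => a i.succ.succ) (Fin.cons A' b))) / 2

/-- Acceleration spinor K_{AB} = τ_B{}^{A'} ∇τ_{AA'}. -/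
def Kacc (τ : SpF G.M 1 1) : G.M → Ix → Ix → ℂ := fun x A B =>
  ∑ A', ∑ B', eps A' B' * τ x ![B] ![B'] * G.nablaN τ τ x ![A] ![A']

/-- Second-fundamental-form spinor K_{ABCD} = τ_D{}^{C'} ∇_{AB}τ_{CC'}. -/
def Ksff (τ : SpF G.M 1 1) : G.M → Ix → Ix → Ix → Ix → ℂ := fun x A B C D =>
  ∑ C', ∑ E', eps C' E' * τ x ![D] ![E'] * G.sen τ τ x ![A, B, C] ![C']

/-- Trace K^{BF}{}_{BF} of the second fundamental form. -/
def KsffTr (τ : SpF G.M 1 1) : G.M → ℂ := fun x =>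
  ∑ B, ∑ F, ∑ P, ∑ Q, eps B P * eps F Q * G.Ksff τ x P Q B F

/-- Totally symmetric (trace-free) part Ω_{ABCD} = K_{(ABCD)}. -/
def Omg (τ : SpF G.M 1 1) : G.M → (Fin 4 → Ix) → ℂ := fun x a =>
  symn (fun v => G.Ksff τ x (v 0) (v 1) (v 2) (v 3)) a

/-- Space-spinor normal derivative D, obtained from ∇ by the K_{AB}-correction on
each index, so that it maps space spinors to space spinors. -/
def Dn (τ : SpF G.M 1 1) {k : ℕ} (f : SpF G.M k 0) : SpF G.M k 0 := fun x a b =>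
  G.nablaN τ f x a b -
    (1/2) * ∑ i : Fin k, ∑ B, (∑ P, eps B P * G.Kacc τ x (a i) P) *
      f x (Function.update a i B) b

/-- Space-spinor spatial derivative D_{AB}, obtained from the Sen connection by the
K_{ABCD}-correction on each index; the two new indices are placed first. -/
def Dsp (τ : SpF G.M 1 1) {k : ℕ} (f : SpF G.M k 0) : SpF G.M (k+2) 0 := fun x a b =>
  G.sen τ f x a b -
    (1/2) * ∑ i : Fin k, ∑ B, (∑ P, eps B P * G.Ksff τ x (a 0) (a 1) (a i.succ.succ) P) *
      f x (Function.update (fun j => a j.succ.succ) i B) b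

/-- τ-Hermitian conjugate Ψ̂ of the Weyl spinor. -/
def hatWeyl (τ : SpF G.M 1 1) : G.M → (Fin 4 → Ix) → ℂ := fun x a =>
  ∑ b : Fin 4 → Ix,
    (∏ i, ∑ B', eps (b i) B' * τ x ![a i] ![B']) * (starRingEnd ℂ) (G.Weyl x b)

/-- Electric part of the Weyl spinor: E = (Ψ̂ + Ψ)/2. -/
def Efield (τ : SpF G.M 1 1) : G.M → (Fin 4 → Ix) → ℂ := fun x a =>
  (G.hatWeyl τ x a + G.Weyl x a) / 2

/-- Magnetic part of the Weyl spinor: B = i(Ψ̂ − Ψ)/2. -/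
def Bfield (τ : SpF G.M 1 1) : G.M → (Fin 4 → Ix) → ℂ := fun x a =>
  Complex.I * (G.hatWeyl τ x a - G.Weyl x a) / 2

end SpinGeom

/-!
Contracting the primed index with the invertible matrix `τ_Q{}^{A'}` (its determinant is
`τ_{AA'}τ^{AA'}/2 = 1`) turns the twistor equation into `μ_{Q(AB)} = 0` for
`μ_{QPC} = τ_Q{}^{A'}∇_{PA'}κ_C`. The Sen derivative `∇_{QP}κ_C` is `μ_{(QP)C}` and the
normal derivative `∇κ_C` is a trace of `μ`, so the first equivalence is the decomposition of
`μ_{Q(AB)}` into its totally symmetric part and its trace. In the second one the correction term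
of `D_{(AB}κ_{C)}` is `K_{(ABC)}{}^Qκ_Q`; the pair symmetry `K_{ABCD} = K_{CDAB}`, together with
the symmetry of `K` in its first two indices, gives `K_{(ABC)Q} = K_{Q(ABC)}`, so it cancels the
explicit `K`-term.
-/

section Symmetrisation

variable {n : ℕ}

theorem symn_comp_perm (f : (Fin n → Ix) → ℂ) (σ : Equiv.Perm (Fin n)) (a : Fin n → Ix) :
    symn (fun v => f (v ∘ σ)) a = symn f a := by
  unfold symn
  congr 1
  exact Equiv.sum_comp (Equiv.mulRight σ) fun ρ : Equiv.Perm (Fin n) => f (a ∘ ρ)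

theorem symn_sub (f g : (Fin n → Ix) → ℂ) (a : Fin n → Ix) :
    symn (fun v => f v - g v) a = symn f a - symn g a := by
  simp only [symn, Finset.sum_sub_distrib, sub_div]

theorem symn_const_mul (c : ℂ) (f : (Fin n → Ix) → ℂ) (a : Fin n → Ix) :
    symn (fun v => c * f v) a = c * symn f a := by
  simp only [symn, ← Finset.mul_sum, mul_div_assoc]

theorem symn_mul_const (f : (Fin n → Ix) → ℂ) (c : ℂ) (a : Fin n → Ix) :
    symn (fun v => f v * c) a = symn f a * c := by
  simp only [symn, ← Finset.sum_mul, div_mul_eq_mul_div]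

theorem symn_sum {ι : Type*} (s : Finset ι) (f : ι → (Fin n → Ix) → ℂ)
    (a : Fin n → Ix) :
    symn (fun v => ∑ i ∈ s, f i v) a = ∑ i ∈ s, symn (f i) a := by
  simp only [symn, Finset.sum_div]
  exact Finset.sum_comm

end Symmetrisation

theorem symn_three (f : (Fin 3 → Ix) → ℂ) (A B C : Ix) :
    symn f ![A, B, C] =
      (f ![A, B, C] + f ![B, A, C] + f ![C, B, A] + f ![A, C, B] + f ![B, C, A] + f ![C, A, B]) /
        6 := by
  have hperms : (Finset.univ : Finset (Equiv.Perm (Fin 3))) =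
      {1, Equiv.swap 0 1, Equiv.swap 0 2, Equiv.swap 1 2, finRotate 3, (finRotate 3)⁻¹} := by
    decide
  rw [symn, hperms, Finset.sum_insert (by decide), Finset.sum_insert (by decide),
    Finset.sum_insert (by decide), Finset.sum_insert (by decide), Finset.sum_pair (by decide),
    show ![A, B, C] ∘ ⇑(1 : Equiv.Perm (Fin 3)) = ![A, B, C] by ext i; fin_cases i <;> rfl,
    show ![A, B, C] ∘ ⇑(Equiv.swap (0 : Fin 3) 1) = ![B, A, C] by ext i; fin_cases i <;> rfl,
    show ![A, B, C] ∘ ⇑(Equiv.swap (0 : Fin 3) 2) = ![C, B, A] by ext i; fin_cases i <;> rfl,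
    show ![A, B, C] ∘ ⇑(Equiv.swap (1 : Fin 3) 2) = ![A, C, B] by ext i; fin_cases i <;> rfl,
    show ![A, B, C] ∘ ⇑(finRotate 3) = ![B, C, A] by ext i; fin_cases i <;> rfl,
    show ![A, B, C] ∘ ⇑(finRotate 3)⁻¹ = ![C, A, B] by ext i; fin_cases i <;> rfl]
  norm_num [Nat.factorial]
  ring

/-- In components both sides are six linear equations: `μ_{Q(AB)}` is determined by its totally
symmetric part (four components) and one valence-1 trace (two components). -/
theorem forall_add_swap_eq_zero_iff (μ : Ix → Ix → Ix → ℂ) :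
    (∀ Q A B, μ Q A B + μ Q B A = 0) ↔
      (∀ B, ∑ A, ∑ P, eps A P * μ P A B +
          (2/3) * ∑ Q, ∑ P, eps Q P * ((μ B P Q + μ P B Q) / 2) = 0) ∧
        ∀ A B C,
          symn (fun v => (μ (v 0) (v 1) (v 2) + μ (v 1) (v 0) (v 2)) / 2) ![A, B, C] = 0 := by
  simp only [symn_three, Fin.forall_fin_two, Fin.sum_univ_two, eps]
  norm_num [Matrix.cons_val_two, Matrix.tail_cons, Matrix.head_cons]
  grind

namespace SpinGeom

open Matrix

variable (G : SpinGeom) (τ : SpF G.M 1 1)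

/-- `τ_Q{}^{A'}`, as a matrix with rows `Q` and columns `A'`. -/
def tauRaised (x : G.M) : Matrix Ix Ix ℂ :=
  of fun Q A' => ∑ B', eps A' B' * τ x ![Q] ![B']

/-- `τ_Q{}^{A'}∇_{PA'}κ_C`; the Sen derivative `∇_{QP}κ_C` is its symmetrisation in `Q, P`.
-/
def tauNabla (κ : SpF G.M 1 0) (x : G.M) (Q P C : Ix) : ℂ :=
  ∑ A', G.tauRaised τ x Q A' * G.nabla κ x ![P, C] ![A']

theorem two_mul_det_tauRaised (x : G.M) :
    2 * (G.tauRaised τ x).det =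
      ∑ A, ∑ A', ∑ B, ∑ B', τ x ![A] ![A'] * eps A B * eps A' B' * τ x ![B] ![B'] := by
  simp only [det_fin_two, tauRaised, of_apply, Fin.sum_univ_two, eps]
  norm_num
  ring

theorem tauNabla_add_swap (κ : SpF G.M 1 0) (x : G.M) (Q A B : Ix) :
    G.tauNabla τ κ x Q A B + G.tauNabla τ κ x Q B A =
      (G.tauRaised τ x *ᵥ fun A' => G.nabla κ x ![A, B] ![A'] + G.nabla κ x ![B, A] ![A'])
        Q := by
  simp only [tauNabla, mulVec, dotProduct, mul_add, Finset.sum_add_distrib]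

theorem twistor_iff_tauNabla (κ : SpF G.M 1 0) (x : G.M) (hdet : (G.tauRaised τ x).det ≠ 0) :
    (∀ A' A B, G.nabla κ x ![A, B] ![A'] + G.nabla κ x ![B, A] ![A'] = 0) ↔
      ∀ Q A B, G.tauNabla τ κ x Q A B + G.tauNabla τ κ x Q B A = 0 := by
  simp only [tauNabla_add_swap]
  refine ⟨fun h Q A B => ?_, fun h A' A B => ?_⟩
  · simp only [h, mulVec, dotProduct, mul_zero, Finset.sum_const_zero]
  · exact congrFun (eq_zero_of_mulVec_eq_zero hdet (funext fun Q => h Q A B)) A'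

theorem sen_eq_tauNabla (κ : SpF G.M 1 0) (x : G.M) (v : Fin 3 → Ix) :
    G.sen τ κ x v ![] =
      (G.tauNabla τ κ x (v 0) (v 1) (v 2) + G.tauNabla τ κ x (v 1) (v 0) (v 2)) / 2 := by
  have htail (A : Ix) : (Fin.cons A fun i : Fin 1 => v i.succ.succ : Fin 2 → Ix) = ![A, v 2] := by
    ext i; fin_cases i <;> rfl
  simp only [sen, tauNabla, tauRaised, of_apply, htail, Finset.sum_mul]
  rfl

theorem nablaN_eq_tauNabla (κ : SpF G.M 1 0) (x : G.M) (C : Ix) :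
    G.nablaN τ κ x ![C] ![] = ∑ A, ∑ P, eps A P * G.tauNabla τ κ x P A C := by
  simp only [nablaN, tauNabla, tauRaised, of_apply, Fin.sum_univ_two, Fin.cons_vecCons,
    Fin.isValue, eps]
  norm_num
  ring

theorem sen_comm {k l : ℕ} (f : SpF G.M k l) (x : G.M) (A B : Ix) (c : Fin k → Ix)
    (b : Fin l → Ix) :
    G.sen τ f x (vecCons A (vecCons B c)) b = G.sen τ f x (vecCons B (vecCons A c)) b := by
  simp only [sen, cons_val_zero, cons_val_one, cons_val_succ]
  ring

theorem Ksff_comm_left (x : G.M) (A B C D : Ix) : G.Ksff τ x A B C D = G.Ksff τ x B A C D := by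
  simp only [Ksff, sen_comm G τ τ x A B]

theorem Dsp_eq_sen_sub (κ : SpF G.M 1 0) (x : G.M) (v : Fin 3 → Ix) :
    G.Dsp τ κ x v ![] = G.sen τ κ x v ![] -
      (1/2) * ∑ B, (∑ P, eps B P * G.Ksff τ x (v 0) (v 1) (v 2) P) * κ x ![B] ![] := by
  have hupdate (B : Ix) : Function.update (fun j : Fin 1 => v j.succ.succ) 0 B = ![B] := by
    ext j; fin_cases j; simp
  simp only [Dsp, Fin.sum_univ_one, hupdate]
  rfl

variable {G τ}

/-- `K_{ABCP} = K_{CPAB} = K_{PCAB}`, a cyclic relabelling of the symmetrised indices. -/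
theorem symn_Ksff_last_eq_first {x : G.M}
    (hK : ∀ A B C D, G.Ksff τ x A B C D = G.Ksff τ x C D A B) (P : Ix) (a : Fin 3 → Ix) :
    symn (fun v => G.Ksff τ x (v 0) (v 1) (v 2) P) a =
      symn (fun v => G.Ksff τ x P (v 0) (v 1) (v 2)) a := by
  have hrot : ∀ v : Fin 3 → Ix, v ∘ (finRotate 3).symm = ![v 2, v 0, v 1] := by
    intro v; ext i; fin_cases i <;> rfl
  rw [← symn_comp_perm (fun v => G.Ksff τ x P (v 0) (v 1) (v 2)) (finRotate 3).symm]
  simp only [hrot, cons_val_zero, cons_val_one, cons_val_two, tail_cons, head_cons, hK _ _ _ P,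
    Ksff_comm_left G τ x _ P]

theorem symn_Dsp_sub_Ksff_contract {x : G.M}
    (hK : ∀ A B C D, G.Ksff τ x A B C D = G.Ksff τ x C D A B) (κ : SpF G.M 1 0)
    (a : Fin 3 → Ix) :
    symn (fun v => G.Dsp τ κ x v ![]) a - (1/2) *
        ∑ Q, symn (fun v => G.Ksff τ x Q (v 0) (v 1) (v 2)) a * ∑ P, eps Q P * κ x ![P] ![] =
      symn (fun v => G.sen τ κ x v ![]) a := by
  simp only [Dsp_eq_sen_sub, symn_sub, symn_const_mul, symn_sum, symn_mul_const,
    symn_Ksff_last_eq_first hK]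
  simp only [Fin.sum_univ_two, eps]
  norm_num
  ring

end SpinGeom

/-- **Orthogonal decomposition of the twistor equation.**
κ_A solves ∇_{A'(A}κ_{B)} = 0 iff
∇κ_B + (2/3)∇_B{}^Qκ_Q = 0 and ∇_{(AB}κ_{C)} = 0; moreover the latter is equivalent
to the spatial twistor equation D_{(AB}κ_{C)} − (1/2)K_{Q(ABC)}κ^Q = 0, which is
intrinsic to the leaves of the foliation. -/
theorem twistor_equation_orthogonal_decomposition (G : SpinGeom)
    (τ : SpF G.M 1 1)
    (hτnorm : ∀ x, (∑ A, ∑ A', ∑ B, ∑ B',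
      τ x ![A] ![A'] * eps A B * eps A' B' * τ x ![B] ![B']) = 2)
    (hτsurf : ∀ x A B C D, G.Ksff τ x A B C D = G.Ksff τ x C D A B)
    (κ : SpF G.M 1 0) :
    ((∀ x A' A B,
        G.nabla κ x ![A, B] ![A'] + G.nabla κ x ![B, A] ![A'] = 0)
      ↔
      ((∀ x B, G.nablaN τ κ x ![B] ![]
          + (2/3) * ∑ Q, ∑ P, eps Q P * G.sen τ κ x ![B, P, Q] ![] = 0)
       ∧
       (∀ x A B C, symn (fun v => G.sen τ κ x v ![]) ![A, B, C] = 0)))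
    ∧
    ((∀ x A B C, symn (fun v => G.sen τ κ x v ![]) ![A, B, C] = 0)
      ↔
      (∀ x A B C,
        symn (fun v => G.Dsp τ κ x v ![]) ![A, B, C]
          - (1/2) * ∑ Q, (symn (fun v => G.Ksff τ x Q (v 0) (v 1) (v 2)) ![A, B, C])
              * (∑ P, eps Q P * κ x ![P] ![]) = 0)) := by
  have hdet (x : G.M) : (G.tauRaised τ x).det = 1 := by
    linear_combination ((G.two_mul_det_tauRaised τ x).trans (hτnorm x)) / 2
  have normal_and_spatial (x : G.M) :
      (∀ A' A B, G.nabla κ x ![A, B] ![A'] + G.nabla κ x ![B, A] ![A'] = 0) ↔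
        (∀ B, G.nablaN τ κ x ![B] ![] +
          (2/3) * ∑ Q, ∑ P, eps Q P * G.sen τ κ x ![B, P, Q] ![] = 0) ∧
        ∀ A B C, symn (fun v => G.sen τ κ x v ![]) ![A, B, C] = 0 := by
    rw [G.twistor_iff_tauNabla τ κ x (by simp [hdet x]), forall_add_swap_eq_zero_iff]
    simp only [G.nablaN_eq_tauNabla, G.sen_eq_tauNabla, Matrix.cons_val_zero, Matrix.cons_val_one,
      Matrix.cons_val_two, Matrix.tail_cons, Matrix.head_cons]
  refine ⟨(forall_congr' normal_and_spatial).trans forall_and, ?_⟩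
  exact forall_congr' fun x => forall₃_congr fun A B C => by
    rw [SpinGeom.symn_Dsp_sub_Ksff_contract (hτsurf x)]
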